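/- arXiv:1701.08351 — 3 statements merged into one kernel-verified Lean document; each statement's English description precedes it below -/
import Mathlib

section
/- Let L be a number field whose class number is a prime number, and suppose that for every integer f > 1 the classes of prime ideals of O_L that are unramified over ℚ and have residue degree f over ℚ do not generate Cl(L). Let a be a positive integer such that every rational prime p dividing a is unramified in L, all prime ideals of O_L above p have the same residue degree f_p over ℚ with f_p > 1, and f_p divides the p-adic valuation v_p(a). Then the norm equation |N_{L/ℚ}(x)| = a has a solution x in L. -/
/-!
As `Cl(L)` has prime order, a subgroup that is not everything is trivial; so every unramified
prime `𝔭` of residue degree `f > 1` is principal, `𝔭 = (π)`, and `|N(π)| = N𝔭 = p ^ f`.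
Since `f ∣ v_p(a)`, a power of `π` has norm `± p ^ v_p(a)`, and the product of these over `p ∣ a`
has norm `± a`.
-/

open NumberField Ideal
open scoped nonZeroDivisors

theorem Subgroup.eq_one_of_mem_of_closure_ne_top {G : Type*} [Group G]
    (hG : (Nat.card G).Prime) {S : Set G} (hS : Subgroup.closure S ≠ ⊤) {x : G} (hx : x ∈ S) :
    x = 1 := by
  have : Fact (Nat.card G).Prime := ⟨hG⟩
  have hbot := (Subgroup.closure S).eq_bot_or_eq_top_of_prime_card.resolve_right hS
  exact Subgroup.mem_bot.mp (hbot ▸ Subgroup.subset_closure hx)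

theorem Nat.mem_of_forall_prime_pow_factorization_mem {M : Submonoid ℕ} {a : ℕ} (ha : a ≠ 0)
    (h : ∀ p, p.Prime → p ∣ a → p ^ a.factorization p ∈ M) : a ∈ M := by
  rw [← Nat.prod_factorization_pow_eq_self ha]
  exact Submonoid.prod_mem M fun p hp =>
    h p (Nat.prime_of_mem_primeFactors hp) (Nat.dvd_of_mem_primeFactors hp)

namespace NumberField

variable (K : Type*) [Field K]

noncomputable def natAbsNormSubmonoid : Submonoid ℕ :=
  MonoidHom.mrange ((Int.natAbsHom : ℤ →* ℕ).comp (Algebra.norm ℤ : 𝓞 K →* ℤ))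

variable {K}

theorem mem_natAbsNormSubmonoid {n : ℕ} :
    n ∈ natAbsNormSubmonoid K ↔ ∃ x : 𝓞 K, (Algebra.norm ℤ x).natAbs = n :=
  Iff.rfl

variable [NumberField K]

theorem exists_abs_norm_eq_of_mem_natAbsNormSubmonoid {n : ℕ} (hn : n ∈ natAbsNormSubmonoid K) :
    ∃ x : K, |Algebra.norm ℚ x| = n := by
  obtain ⟨x, rfl⟩ := mem_natAbsNormSubmonoid.mp hn
  refine ⟨x, ?_⟩
  rw [← Algebra.coe_norm_int, Nat.cast_natAbs, Int.cast_abs]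

theorem absNorm_mem_natAbsNormSubmonoid {I : (Ideal (𝓞 K))⁰} (hI : ClassGroup.mk0 I = 1) :
    absNorm (I : Ideal (𝓞 K)) ∈ natAbsNormSubmonoid K := by
  obtain ⟨x, hx⟩ := (ClassGroup.mk0_eq_one_iff I.2).mp hI
  exact mem_natAbsNormSubmonoid.mpr ⟨x, by rw [hx, absNorm_span_singleton]⟩

theorem exists_isPrime_comap_eq_span_natCast {p : ℕ} (hp : p.Prime) :
    ∃ 𝔭 : Ideal (𝓞 K), 𝔭.IsPrime ∧ 𝔭.comap (algebraMap ℤ (𝓞 K)) = span {(p : ℤ)} := by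
  have := Fact.mk hp
  obtain ⟨𝔭, h𝔭, h𝔭p⟩ := exists_maximal_ideal_liesOver_of_isIntegral (S := 𝓞 K) (span {(p : ℤ)})
  exact ⟨𝔭, h𝔭.isPrime, h𝔭p.over.symm⟩

end NumberField

/-- Let `L` be a number field whose class number is prime, and suppose that for every
integer `f > 1` the classes of prime ideals of `𝓞 L` unramified over `ℚ` of residue degree
`f` over `ℚ` do not generate `Cl(L)`.  Let `a` be a positive integer such that every rational
prime `p` dividing `a` is unramified in `L`, all primes of `𝓞 L` above `p` have the same
residue degree `f_p > 1` over `ℚ`, and `f_p ∣ v_p(a)`.  Then `|N_{L/ℚ}(x)| = a` has a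
solution `x ∈ L`. -/
theorem statement5 (L : Type) [Field L] [NumberField L]
    (hcl : (Nat.card (ClassGroup (𝓞 L))).Prime)
    (hngen : ∀ f : ℕ, 1 < f →
      Subgroup.closure
        {c : ClassGroup (𝓞 L) | ∃ (𝔭 : Ideal (𝓞 L)) (h𝔭 : 𝔭 ∈ (Ideal (𝓞 L))⁰),
          𝔭.IsPrime ∧
          Ideal.ramificationIdx' (𝔭.comap (algebraMap ℤ (𝓞 L))) 𝔭 = 1 ∧
          Ideal.inertiaDeg' (𝔭.comap (algebraMap ℤ (𝓞 L))) 𝔭 = f ∧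
          c = ClassGroup.mk0 ⟨𝔭, h𝔭⟩} ≠ ⊤)
    (a : ℕ) (ha : 0 < a)
    (hprimes : ∀ p : ℕ, p.Prime → p ∣ a →
      (∀ 𝔭 : Ideal (𝓞 L), 𝔭.IsPrime →
        𝔭.comap (algebraMap ℤ (𝓞 L)) = Ideal.span {(p : ℤ)} →
        Ideal.ramificationIdx' (𝔭.comap (algebraMap ℤ (𝓞 L))) 𝔭 = 1) ∧
      ∃ f : ℕ, 1 < f ∧
        (∀ 𝔭 : Ideal (𝓞 L), 𝔭.IsPrime →
          𝔭.comap (algebraMap ℤ (𝓞 L)) = Ideal.span {(p : ℤ)} →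
          Ideal.inertiaDeg' (𝔭.comap (algebraMap ℤ (𝓞 L))) 𝔭 = f) ∧
        f ∣ padicValNat p a) :
    ∃ x : L, |Algebra.norm ℚ x| = (a : ℚ) := by
  refine exists_abs_norm_eq_of_mem_natAbsNormSubmonoid <|
    Nat.mem_of_forall_prime_pow_factorization_mem ha.ne' fun p hp hpa => ?_
  obtain ⟨hunram, f, hf, hdeg, k, hk⟩ := hprimes p hp hpa
  obtain ⟨𝔭, h𝔭, h𝔭p⟩ := exists_isPrime_comap_eq_span_natCast (K := L) hp
  have : 𝔭.LiesOver (span {(p : ℤ)}) := ⟨h𝔭p.symm⟩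
  have h𝔭0 : 𝔭 ∈ (Ideal (𝓞 L))⁰ := mem_nonZeroDivisors_of_ne_zero <|
    ne_bot_of_liesOver_of_ne_bot (p := span {(p : ℤ)}) (by simpa using hp.ne_zero) 𝔭
  have hprincipal : ClassGroup.mk0 ⟨𝔭, h𝔭0⟩ = 1 :=
    Subgroup.eq_one_of_mem_of_closure_ne_top hcl (hngen f hf)
      ⟨𝔭, h𝔭0, h𝔭, hunram 𝔭 h𝔭 h𝔭p, hdeg 𝔭 h𝔭 h𝔭p, rfl⟩
  have hnorm : absNorm 𝔭 = p ^ f := by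
    rw [absNorm_eq_pow_inertiaDeg' 𝔭 hp, ← h𝔭p, hdeg 𝔭 h𝔭 h𝔭p]
  rw [Nat.factorization_def a hp, hk, pow_mul, ← hnorm]
  exact pow_mem (absNorm_mem_natAbsNormSubmonoid hprincipal) k
end

section
/- Let L be a number field that is Galois over ℚ and whose class number h_L is coprime to the degree [L:ℚ]. Then for every rational prime p, if f denotes the common residue degree over ℚ of the prime ideals of O_L above p, there exists α in L with |N_{L/ℚ}(α)| = p^f. -/
open NumberField Ideal
open scoped nonZeroDivisors

/-!
Let `𝔭` be a prime of `𝓞 L` above `p`, so `N𝔭 = p ^ f`, and let `d` be the order of its class.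
Then `𝔭 ^ d = (γ)` with `|N γ| = p ^ (f d)`, while `|N p| = p ^ n` for `n = [L:ℚ]`. Since `d ∣ h_L`
is coprime to `n`, Bézout gives `a d + b n = 1`, and `α = γ ^ a * p ^ b` has `|N α| = p ^ f`.
-/

namespace NumberField

variable {K : Type*} [Field K] [NumberField K]

theorem exists_abs_norm_eq_absNorm_pow_orderOf (I : (Ideal (𝓞 K))⁰) :
    ∃ γ : K, |Algebra.norm ℚ γ| =
      (absNorm (I : Ideal (𝓞 K)) : ℚ) ^ orderOf (ClassGroup.mk0 I) := by
  obtain ⟨γ, hγ⟩ : ((I : Ideal (𝓞 K)) ^ orderOf (ClassGroup.mk0 I)).IsPrincipal := by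
    rw [← ClassGroup.mk0_eq_one_iff (pow_mem I.2 _)]
    exact (map_pow ClassGroup.mk0 I _).trans (pow_orderOf_eq_one _)
  refine ⟨γ, ?_⟩
  rw [← Algebra.coe_norm_int, ← Int.cast_abs, Int.abs_eq_natAbs, ← absNorm_span_singleton,
    ← submodule_span_eq, ← hγ, map_pow]
  push_cast; rfl

theorem exists_abs_norm_eq_absNorm_of_coprime (I : (Ideal (𝓞 K))⁰)
    (h : (orderOf (ClassGroup.mk0 I)).Coprime (Module.finrank ℚ K)) :
    ∃ α : K, |Algebra.norm ℚ α| = absNorm (I : Ideal (𝓞 K)) := by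
  obtain ⟨γ, hγ⟩ := exists_abs_norm_eq_absNorm_pow_orderOf I
  set N : ℚ := ((absNorm (I : Ideal (𝓞 K)) : ℕ) : ℚ)
  have hN : N ≠ 0 := by
    simpa [N] using absNorm_ne_zero_of_nonZeroDivisors I
  obtain ⟨a, b, hab⟩ := Nat.isCoprime_iff_coprime.mpr h
  refine ⟨γ ^ a * algebraMap ℚ K N ^ b, ?_⟩
  rw [map_mul, Algebra.norm_zpow, Algebra.norm_zpow, Algebra.norm_algebraMap, abs_mul, abs_zpow,
    abs_zpow, hγ, abs_pow, abs_of_nonneg (by positivity : 0 ≤ N), ← zpow_natCast, ← zpow_natCast,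
    ← zpow_mul, ← zpow_mul, ← zpow_add₀ hN, mul_comm, mul_comm _ b, hab, zpow_one]

end NumberField

theorem statement7_general (L : Type) [Field L] [NumberField L]
    (hcop : (Nat.card (ClassGroup (𝓞 L))).Coprime (Module.finrank ℚ L))
    (p : ℕ) (hp : p.Prime) (f : ℕ)
    (hf : ∀ 𝔭 : Ideal (𝓞 L), 𝔭.IsPrime →
      𝔭.comap (algebraMap ℤ (𝓞 L)) = Ideal.span {(p : ℤ)} →
      Ideal.inertiaDeg' (𝔭.comap (algebraMap ℤ (𝓞 L))) 𝔭 = f) :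
    ∃ α : L, |Algebra.norm ℚ α| = (p : ℚ) ^ f := by
  have : (span {(p : ℤ)}).IsMaximal :=
    PrincipalIdealRing.isMaximal_of_irreducible (Nat.prime_iff_prime_int.mp hp).irreducible
  obtain ⟨𝔭, h𝔭, _⟩ := exists_maximal_ideal_liesOver_of_isIntegral (S := 𝓞 L) (span {(p : ℤ)})
  have h𝔭_over : 𝔭.comap (algebraMap ℤ (𝓞 L)) = span {(p : ℤ)} := (over_def 𝔭 _).symm
  have h𝔭_norm : absNorm 𝔭 = p ^ f := by
    rw [absNorm_eq_pow_inertiaDeg' 𝔭 hp, ← hf 𝔭 h𝔭.isPrime h𝔭_over, h𝔭_over]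
  have h𝔭_ne : 𝔭 ∈ (Ideal (𝓞 L))⁰ := mem_nonZeroDivisors_of_ne_zero <| by
    rintro rfl
    exact pow_ne_zero f hp.ne_zero (by simpa using h𝔭_norm.symm)
  obtain ⟨α, hα⟩ := exists_abs_norm_eq_absNorm_of_coprime ⟨𝔭, h𝔭_ne⟩
    (Nat.Coprime.coprime_dvd_left (orderOf_dvd_natCard _) hcop)
  exact ⟨α, by rw [hα, h𝔭_norm]; push_cast; rfl⟩

/-- Let `L` be a number field, Galois over `ℚ`, whose class number is coprime to the degree
`[L:ℚ]`.  Then for every rational prime `p`, if `f` is the common residue degree over `ℚ`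
of the primes of `𝓞 L` above `p`, there exists `α ∈ L` with `|N_{L/ℚ}(α)| = p ^ f`. -/
theorem statement7 (L : Type) [Field L] [NumberField L] [IsGalois ℚ L]
    (hcop : (Nat.card (ClassGroup (𝓞 L))).Coprime (Module.finrank ℚ L))
    (p : ℕ) (hp : p.Prime) (f : ℕ)
    (hf : ∀ 𝔭 : Ideal (𝓞 L), 𝔭.IsPrime →
      𝔭.comap (algebraMap ℤ (𝓞 L)) = Ideal.span {(p : ℤ)} →
      Ideal.inertiaDeg' (𝔭.comap (algebraMap ℤ (𝓞 L))) 𝔭 = f) :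
    ∃ α : L, |Algebra.norm ℚ α| = (p : ℚ) ^ f :=
  statement7_general L hcop p hp f hf
end

section
/- In the integral group ring ℤ[G] of G = (ℤ/23ℤ)ˣ, there do not exist integers a_0, a_1, …, a_11 such that σ_1 + σ_5 = a_0·N + a_1·f_1 + a_2·f_2 + … + a_11·f_11. -/
/-!
Multiplication by `1 + σ_{-1}` sends everything on the right-hand side into `ℤ N`: for `23 ∤ a`
the coefficients of `θ_a` at `σ` and `-σ` are `⌊ab/23⌋` and `⌊a(23-b)/23⌋`, which add up to
`a - 1`, so `(1 + σ_{-1}) θ_a = (a - 1) N`, hence `(1 + σ_{-1}) f_i = N` and `(1 + σ_{-1}) N = 2 N`.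
But `(1 + σ_{-1})(σ_1 + σ_5) = σ_1 + σ_5 + σ_18 + σ_22` has coefficient `1` at `σ_1` and `0` at `σ_2`.
-/

/-- `θ_a = Σ_{i=1}^{22} ⌊a i / 23⌋ σ_i⁻¹` in `ℤ[(ℤ/23ℤ)ˣ]`, where `σ_i` is the unit with
canonical representative `i`. -/
noncomputable def theta (a : ℕ) : MonoidAlgebra ℤ (ZMod 23)ˣ :=
  ∑ u : (ZMod 23)ˣ, MonoidAlgebra.single u⁻¹ ((a * (u : ZMod 23).val / 23 : ℕ) : ℤ)

/-- `f_i = θ_{i+1} - θ_i`. -/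
noncomputable def fKummer (i : ℕ) : MonoidAlgebra ℤ (ZMod 23)ˣ := theta (i + 1) - theta i

/-- The `G`-trace `N = Σ_{σ ∈ G} σ` in `ℤ[(ℤ/23ℤ)ˣ]`. -/
noncomputable def Ntrace : MonoidAlgebra ℤ (ZMod 23)ˣ :=
  ∑ u : (ZMod 23)ˣ, MonoidAlgebra.single u 1

open MonoidAlgebra

theorem Nat.div_add_div_of_add_eq_mul {x y a n : ℕ} (h : x + y = a * n) (hx : ¬ n ∣ x) :
    x / n + y / n = a - 1 := by
  have hn : 0 < n := Nat.pos_of_ne_zero fun hn => hx (by simp_all)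
  have hmod : n ≤ x % n + y % n := by
    have hpos : 0 < x % n := Nat.pos_of_ne_zero fun h0 => hx (Nat.dvd_of_mod_eq_zero h0)
    have hdvd : n ∣ x % n + y % n := by
      rw [Nat.dvd_iff_mod_eq_zero, ← Nat.add_mod, h, Nat.mul_mod_left]
    exact Nat.le_of_dvd (by omega) hdvd
  have := Nat.add_div_eq_of_le_mod_add_mod hmod hn
  rw [h, Nat.mul_div_cancel _ hn] at this
  exact Nat.eq_sub_of_add_eq this.symm

theorem ZMod.val_neg_add_val_of_ne_zero {n : ℕ} [NeZero n] {a : ZMod n} (ha : a ≠ 0) :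
    (-a).val + a.val = n := by
  have := a.val_lt
  rw [ZMod.neg_val, if_neg ha]
  omega

theorem ZMod.mul_val_div_add_mul_val_neg_div {p : ℕ} [Fact p.Prime] {a : ℕ} (ha : ¬ p ∣ a)
    {b : ZMod p} (hb : b ≠ 0) : a * b.val / p + a * (-b).val / p = a - 1 := by
  refine Nat.div_add_div_of_add_eq_mul ?_ ?_
  · rw [← mul_add, add_comm, ZMod.val_neg_add_val_of_ne_zero hb]
  · rw [Nat.Prime.dvd_mul Fact.out]
    rintro (h | h)
    · exact ha h
    · exact hb (by rwa [← ZMod.natCast_zmod_val b, ZMod.natCast_eq_zero_iff])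

theorem coeff_one_add_single_mul {R G : Type*} [Semiring R] [Group G] (g : G)
    (x : MonoidAlgebra R G) (h : G) :
    ((1 + single g 1) * x).coeff h = x.coeff h + x.coeff (g⁻¹ * h) := by
  rw [add_mul, one_mul, coeff_add, Finsupp.add_apply, coeff_single_mul_apply, one_mul]

theorem theta_coeff (a : ℕ) (u : (ZMod 23)ˣ) :
    (theta a).coeff u = ((a * ((u⁻¹ : (ZMod 23)ˣ) : ZMod 23).val / 23 : ℕ) : ℤ) := by
  rw [theta, coeff_sum, Finsupp.finsetSum_apply, Finset.sum_eq_single_of_mem u⁻¹ (Finset.mem_univ _)]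
  · rw [inv_inv, coeff_single, Finsupp.single_eq_same]
  · rintro v - hv
    rw [coeff_single, Finsupp.single_eq_of_ne]
    rintro rfl
    exact hv (inv_inv v).symm

theorem Ntrace_coeff (u : (ZMod 23)ˣ) : Ntrace.coeff u = 1 := by
  rw [Ntrace, coeff_sum, Finsupp.finsetSum_apply, Finset.sum_eq_single_of_mem u (Finset.mem_univ _)]
  · rw [coeff_single, Finsupp.single_eq_same]
  · rintro v - hv
    rw [coeff_single, Finsupp.single_eq_of_ne hv.symm]

theorem theta_coeff_add_coeff_neg {a : ℕ} (ha : ¬ 23 ∣ a) (u : (ZMod 23)ˣ) :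
    (theta a).coeff u + (theta a).coeff (-u) = a - 1 := by
  have : Fact (Nat.Prime 23) := ⟨by norm_num⟩
  have hsum := ZMod.mul_val_div_add_mul_val_neg_div ha (u⁻¹).ne_zero
  have ha1 : 1 ≤ a := Nat.pos_of_ne_zero fun h => ha (h ▸ dvd_zero 23)
  rw [theta_coeff, theta_coeff, inv_neg, Units.val_neg]
  omega

theorem one_add_single_neg_one_mul_theta {a : ℕ} (ha : ¬ 23 ∣ a) :
    (1 + single (-1) 1) * theta a = ((a : ℤ) - 1) • Ntrace := by
  ext u
  rw [coeff_one_add_single_mul, inv_neg_one, neg_one_mul, theta_coeff_add_coeff_neg ha,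
    coeff_smul_apply, Ntrace_coeff, smul_eq_mul, mul_one]

theorem one_add_single_neg_one_mul_fKummer {i : ℕ} (hi : ¬ 23 ∣ i) (hi' : ¬ 23 ∣ i + 1) :
    (1 + single (-1) 1) * fKummer i = Ntrace := by
  rw [fKummer, mul_sub, one_add_single_neg_one_mul_theta hi', one_add_single_neg_one_mul_theta hi,
    ← sub_smul, Nat.cast_succ, add_sub_cancel_right, sub_sub_cancel, one_smul]

theorem one_add_single_neg_one_mul_Ntrace :
    (1 + single (-1) 1) * Ntrace = (2 : ℤ) • Ntrace := by
  ext u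
  rw [coeff_one_add_single_mul, coeff_smul_apply, Ntrace_coeff, Ntrace_coeff, smul_eq_mul, mul_one,
    one_add_one_eq_two]

theorem one_add_single_neg_one_mul_combination (a : ℕ → ℤ) :
    (1 + single (-1) 1) * (a 0 • Ntrace + ∑ i ∈ Finset.Icc 1 11, a i • fKummer i) =
      (2 * a 0 + ∑ i ∈ Finset.Icc 1 11, a i) • Ntrace := by
  rw [mul_add, Finset.mul_sum, mul_smul_comm, one_add_single_neg_one_mul_Ntrace, smul_smul,
    add_smul, Finset.sum_smul, mul_comm]
  congr 1
  refine Finset.sum_congr rfl fun i hi => ?_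
  rw [Finset.mem_Icc] at hi
  rw [mul_smul_comm, one_add_single_neg_one_mul_fKummer (by omega) (by omega)]

/-- In `ℤ[(ℤ/23ℤ)ˣ]` there are no integers `a_0, …, a_11` with
`σ_1 + σ_5 = a_0 N + a_1 f_1 + ⋯ + a_11 f_11`. -/
theorem statement8 :
    ¬ ∃ a : ℕ → ℤ,
      MonoidAlgebra.single (ZMod.unitOfCoprime 1 (by decide) : (ZMod 23)ˣ) (1 : ℤ) +
        MonoidAlgebra.single (ZMod.unitOfCoprime 5 (by decide) : (ZMod 23)ˣ) (1 : ℤ) =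
      a 0 • Ntrace + ∑ i ∈ Finset.Icc 1 11, a i • fKummer i := by
  rintro ⟨a, h⟩
  set x := single (ZMod.unitOfCoprime 1 (by decide) : (ZMod 23)ˣ) (1 : ℤ) +
    single (ZMod.unitOfCoprime 5 (by decide) : (ZMod 23)ˣ) (1 : ℤ)
  have hx1 : ((1 + single (-1) 1) * x).coeff 1 = 1 := by
    simp +decide [x, coeff_one_add_single_mul, coeff_single, Finsupp.single_apply]
  have hx2 : ((1 + single (-1) 1) * x).coeff (ZMod.unitOfCoprime 2 (by decide)) = 0 := by
    simp +decide [x, coeff_one_add_single_mul, coeff_single]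
  rw [h, one_add_single_neg_one_mul_combination, coeff_smul_apply, Ntrace_coeff, smul_eq_mul,
    mul_one] at hx1 hx2
  exact one_ne_zero (hx1.symm.trans hx2)
end
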